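/- arXiv:2406.11387 — 10 statements merged into one kernel-verified Lean document; each statement's English description precedes it below -/
import Mathlib

section
/- Let n = p₁³p₂⋯p_k with k ≥ 2, where the pᵢ are pairwise distinct prime numbers. Then the second ideal intersection graph SII(ℤ_n) contains a cycle of length 3; concretely, the ideals ⟨p₁²p₂⋯p_k⟩, ⟨p₂⋯p_k⟩ and ⟨p₁²⟩ are three pairwise adjacent vertices of SII(ℤ_n). -/
open Pointwise

/-- An ideal `I` of a commutative ring `R` is a *second ideal* if `I ≠ (0)` and
for every `r : R`, either `r • I = (0)` or `r • I = I`. -/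
def IsSecondIdeal {R : Type*} [CommRing R] (I : Ideal R) : Prop :=
  I ≠ ⊥ ∧ ∀ r : R, r • I = ⊥ ∨ r • I = I

/-- The *second ideal intersection graph* `SII R`: vertices are the nonzero proper
ideals of `R`, and two distinct vertices `I`, `J` are adjacent iff `I ⊓ J` is a
second ideal of `R`. -/
def SII (R : Type*) [CommRing R] : SimpleGraph {I : Ideal R // I ≠ ⊥ ∧ I ≠ ⊤} where
  Adj I J := I ≠ J ∧ IsSecondIdeal (I.1 ⊓ J.1)
  symm := ⟨fun I J h => ⟨h.1.symm, by rw [inf_comm]; exact h.2⟩⟩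
  loopless := ⟨fun I h => h.1 rfl⟩

theorem smul_span_singleton' {R : Type*} [CommRing R] (r g : R) :
    r • Ideal.span {g} = Ideal.span {r * g} := by
  ext x
  rw [← SetLike.mem_coe, Submodule.coe_pointwise_smul, Set.mem_smul_set]
  simp only [SetLike.mem_coe, Ideal.mem_span_singleton]
  constructor
  · rintro ⟨s, ⟨c, rfl⟩, rfl⟩; exact ⟨c, by rw [smul_eq_mul]; ring⟩
  · rintro ⟨c, rfl⟩; exact ⟨g * c, ⟨c, rfl⟩, by rw [smul_eq_mul]; ring⟩

theorem zmod_dvd_iff (n : ℕ) [NeZero n] (a b : ℤ) :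
    ((a : ZMod n) ∣ (b : ZMod n)) ↔ ∃ c : ℤ, (n:ℤ) ∣ b - a * c := by
  constructor
  · rintro ⟨y, hy⟩
    obtain ⟨c, rfl⟩ := ZMod.intCast_surjective y
    refine ⟨c, (ZMod.intCast_zmod_eq_zero_iff_dvd _ _).mp ?_⟩
    push_cast
    rw [hy]; ring
  · rintro ⟨c, h⟩
    refine ⟨(c : ZMod n), ?_⟩
    have h2 : ((b - a*c : ℤ) : ZMod n) = 0 := (ZMod.intCast_zmod_eq_zero_iff_dvd _ _).mpr h
    push_cast at h2
    linear_combination h2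

/-- Main work lemma, stated with clean variables. -/
theorem main_work (Q M : ℕ) (hQp : Q.Prime) (hM2 : 2 ≤ M) (hQM : ¬ Q ∣ M)
    (n : ℕ) (hn : n = Q ^ 3 * M) :
    ∀ I J K : Ideal (ZMod n),
    I = Ideal.span {((Q^2 * M : ℕ) : ZMod n)} →
    J = Ideal.span {((M : ℕ) : ZMod n)} →
    K = Ideal.span {((Q^2 : ℕ) : ZMod n)} →
    (I ≠ ⊥ ∧ I ≠ ⊤) ∧ (J ≠ ⊥ ∧ J ≠ ⊤) ∧ (K ≠ ⊥ ∧ K ≠ ⊤) ∧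
    I ≠ J ∧ J ≠ K ∧ K ≠ I ∧
    I ⊓ J = I ∧ J ⊓ K = I ∧ K ⊓ I = I ∧ IsSecondIdeal I := by
  rintro I' J' K' rfl rfl rfl
  set I : Ideal (ZMod n) := Ideal.span {((Q^2 * M : ℕ) : ZMod n)} with hIdef
  set J : Ideal (ZMod n) := Ideal.span {((M : ℕ) : ZMod n)} with hJdef
  set K : Ideal (ZMod n) := Ideal.span {((Q^2 : ℕ) : ZMod n)} with hKdef
  have hQ2 : 2 ≤ Q := hQp.two_le
  have hnpos : 0 < n := by rw [hn]; positivity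
  haveI : NeZero n := ⟨hnpos.ne'⟩
  have hQz : (2:ℤ) ≤ (Q:ℤ) := by exact_mod_cast hQ2
  have hMz : (2:ℤ) ≤ (M:ℤ) := by exact_mod_cast hM2
  have hQ1 : ¬ ((Q:ℤ) ∣ 1) := fun h => by have := Int.le_of_dvd one_pos h; omega
  have hM1 : ¬ ((M:ℤ) ∣ 1) := fun h => by have := Int.le_of_dvd one_pos h; omega
  have hnz : (n:ℤ) = (Q:ℤ)^3 * (M:ℤ) := by exact_mod_cast congrArg (Nat.cast : ℕ → ℤ) hn
  -- ≠ ⊥ facts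
  have hlt : ∀ g : ℕ, 0 < g → g < n → ((g : ZMod n) : ZMod n) ≠ 0 := by
    intro g hg hgn h
    have := (ZMod.natCast_eq_zero_iff _ _).mp h
    have := Nat.le_of_dvd hg this
    omega
  have hIbot : I ≠ ⊥ := by
    rw [Ne, Ideal.span_singleton_eq_bot]
    exact hlt _ (by positivity) (by rw [hn]; nlinarith [sq_nonneg Q])
  have hJbot : J ≠ ⊥ := by
    rw [Ne, Ideal.span_singleton_eq_bot]
    refine hlt _ (by omega) ?_
    rw [hn]
    have h8 : 2^3 ≤ Q^3 := Nat.pow_le_pow_left hQ2 3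
    have := Nat.mul_le_mul_right M h8
    omega
  have hKbot : K ≠ ⊥ := by
    rw [Ne, Ideal.span_singleton_eq_bot]
    refine hlt _ (by positivity) ?_
    rw [hn]
    have h4 : 2*2 ≤ Q*M := Nat.mul_le_mul hQ2 hM2
    have h1 : Q^2*(2*2) ≤ Q^2*(Q*M) := Nat.mul_le_mul_left _ h4
    have h2 : Q^2*(Q*M) = Q^3*M := by ring
    have h3 : 0 < Q^2 := by positivity
    omega
  -- ≠ ⊤ facts: a common divisor of the generator and n of size ≥ 2
  have hnetop : ∀ g d : ℕ, 2 ≤ d → d ∣ g → d ∣ n →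
      (Ideal.span {((g:ℕ) : ZMod n)} : Ideal (ZMod n)) ≠ ⊤ := by
    intro g d hd hdg hdn htop
    have h1 : ((g:ℕ) : ZMod n) ∣ 1 := (Ideal.span_singleton_eq_top.mp htop).dvd
    have h1' : (((g:ℕ):ℤ) : ZMod n) ∣ (((1:ℕ):ℤ) : ZMod n) := by push_cast; push_cast at h1; exact h1
    obtain ⟨c, t, ht⟩ := (zmod_dvd_iff n _ _).mp h1'
    obtain ⟨e, he⟩ := hdg
    obtain ⟨f, hf⟩ := hdn
    have hd1 : (d:ℤ) ∣ 1 := ⟨(e:ℤ)*c + (f:ℤ)*t, by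
      have he' : (g:ℤ) = (d:ℤ) * e := by exact_mod_cast he
      have hf' : (n:ℤ) = (d:ℤ) * f := by exact_mod_cast hf
      linear_combination ht + c * he' + t * hf'⟩
    have := Int.le_of_dvd one_pos hd1
    have : (2:ℤ) ≤ (d:ℤ) := by exact_mod_cast hd
    omega
  have hItop : I ≠ ⊤ := hnetop _ Q hQ2 ⟨Q*M, by ring⟩ ⟨Q^2*M, by rw [hn]; ring⟩
  have hJtop : J ≠ ⊤ := hnetop _ M hM2 dvd_rfl ⟨Q^3, by rw [hn]; ring⟩
  have hKtop : K ≠ ⊤ := hnetop _ Q hQ2 ⟨Q, by ring⟩ ⟨Q^2*M, by rw [hn]; ring⟩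
  -- membership / non-membership
  have hMJ : ((M:ℕ) : ZMod n) ∈ J := Ideal.mem_span_singleton_self _
  have hMI : ((M:ℕ) : ZMod n) ∉ I := by
    rw [Ideal.mem_span_singleton]
    intro h
    have h' : (((Q^2*M:ℕ):ℤ) : ZMod n) ∣ (((M:ℕ):ℤ) : ZMod n) := by
      push_cast; push_cast at h; exact h
    obtain ⟨c, t, ht⟩ := (zmod_dvd_iff n _ _).mp h'
    push_cast [hnz] at ht
    have key : (M:ℤ) * (1 - (Q:ℤ)^2*c - (Q:ℤ)^3*t) = 0 := by linear_combination ht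
    have hM0 : (M:ℤ) ≠ 0 := by omega
    have key2 : 1 - (Q:ℤ)^2*c - (Q:ℤ)^3*t = 0 := by
      rcases mul_eq_zero.mp key with h | h
      · exact absurd h hM0
      · exact h
    exact hQ1 ⟨(Q:ℤ)*c + (Q:ℤ)^2*t, by linear_combination key2⟩
  have hMK : ((M:ℕ) : ZMod n) ∉ K := by
    rw [Ideal.mem_span_singleton]
    intro h
    have h' : (((Q^2:ℕ):ℤ) : ZMod n) ∣ (((M:ℕ):ℤ) : ZMod n) := by
      push_cast; push_cast at h; exact h
    obtain ⟨c, t, ht⟩ := (zmod_dvd_iff n _ _).mp h'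
    push_cast [hnz] at ht
    have : (Q:ℤ) ∣ (M:ℤ) := ⟨(Q:ℤ)*c + (Q:ℤ)^2*(M:ℤ)*t, by linear_combination ht⟩
    exact hQM (by exact_mod_cast this)
  have hQ2K : ((Q^2:ℕ) : ZMod n) ∈ K := Ideal.mem_span_singleton_self _
  have hQ2I : ((Q^2:ℕ) : ZMod n) ∉ I := by
    rw [Ideal.mem_span_singleton]
    intro h
    have h' : (((Q^2*M:ℕ):ℤ) : ZMod n) ∣ (((Q^2:ℕ):ℤ) : ZMod n) := by
      push_cast; push_cast at h; exact h
    obtain ⟨c, t, ht⟩ := (zmod_dvd_iff n _ _).mp h'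
    push_cast [hnz] at ht
    have key : (Q:ℤ)^2 * (1 - (M:ℤ)*c - (Q:ℤ)*(M:ℤ)*t) = 0 := by linear_combination ht
    have hQ0 : (Q:ℤ)^2 ≠ 0 := by positivity
    have key2 : 1 - (M:ℤ)*c - (Q:ℤ)*(M:ℤ)*t = 0 := by
      rcases mul_eq_zero.mp key with h | h
      · exact absurd h hQ0
      · exact h
    exact hM1 ⟨c + (Q:ℤ)*t, by linear_combination key2⟩
  have hIJne : I ≠ J := fun h => hMI (h ▸ hMJ)
  have hJKne : J ≠ K := fun h => hMK (h ▸ hMJ)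
  have hKIne : K ≠ I := fun h => hQ2I (h ▸ hQ2K)
  -- inclusions
  have hIJ : I ≤ J := Ideal.span_singleton_le_span_singleton.mpr
    ⟨((Q^2:ℕ) : ZMod n), by push_cast; ring⟩
  have hIK : I ≤ K := Ideal.span_singleton_le_span_singleton.mpr
    ⟨((M:ℕ) : ZMod n), by push_cast; ring⟩
  have hinfIJ : I ⊓ J = I := inf_eq_left.mpr hIJ
  have hinfKI : K ⊓ I = I := inf_eq_right.mpr hIK
  have hinfJK : J ⊓ K = I := by
    refine le_antisymm ?_ (le_inf hIJ hIK)
    intro x hx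
    obtain ⟨hxJ, hxK⟩ := hx
    obtain ⟨X, rfl⟩ := ZMod.intCast_surjective x
    have hxJ' : (((M:ℕ):ℤ) : ZMod n) ∣ ((X:ℤ) : ZMod n) := by
      have h := Ideal.mem_span_singleton.mp
        (show ((X:ℤ) : ZMod n) ∈ Ideal.span {((M:ℕ) : ZMod n)} from hxJ)
      push_cast at h ⊢; exact h
    have hxK' : (((Q^2:ℕ):ℤ) : ZMod n) ∣ ((X:ℤ) : ZMod n) := by
      have h := Ideal.mem_span_singleton.mp
        (show ((X:ℤ) : ZMod n) ∈ Ideal.span {((Q^2:ℕ) : ZMod n)} from hxK)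
      push_cast at h ⊢; exact h
    obtain ⟨c, t, ht⟩ := (zmod_dvd_iff n _ _).mp hxJ'
    obtain ⟨d, s, hs⟩ := (zmod_dvd_iff n _ _).mp hxK'
    push_cast [hnz] at ht hs
    have hMX : (M:ℤ) ∣ X := ⟨c + (Q:ℤ)^3*t, by linear_combination ht⟩
    have hQX : ((Q^2:ℕ):ℤ) ∣ X := by
      push_cast
      exact ⟨d + (Q:ℤ)*(M:ℤ)*s, by linear_combination hs⟩
    have hcop : IsCoprime ((Q^2:ℕ):ℤ) ((M:ℕ):ℤ) := by
      rw [Int.isCoprime_iff_gcd_eq_one]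
      have : Nat.Coprime (Q^2) M := (Nat.Coprime.pow_left 2
        ((Nat.Prime.coprime_iff_not_dvd hQp).mpr hQM))
      simpa [Int.gcd, Int.natAbs_pow] using this
    have hdvd : ((Q^2*M : ℕ):ℤ) ∣ X := by
      push_cast
      push_cast at hcop hQX
      exact hcop.mul_dvd hQX hMX
    obtain ⟨e, he⟩ := hdvd
    refine Ideal.mem_span_singleton.mpr ?_
    have : (((Q^2*M:ℕ):ℤ) : ZMod n) ∣ ((X:ℤ) : ZMod n) :=
      (zmod_dvd_iff n _ _).mpr ⟨e, by rw [he]; ring_nf; exact dvd_zero _⟩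
    push_cast at this ⊢
    exact this
  -- I is a second ideal
  have hsec : IsSecondIdeal I := by
    refine ⟨hIbot, fun r => ?_⟩
    obtain ⟨c, rfl⟩ := ZMod.intCast_surjective r
    rw [smul_span_singleton']
    have hrg : ((c:ℤ) : ZMod n) * ((Q^2*M : ℕ) : ZMod n) = ((c * (Q^2*M : ℕ) : ℤ) : ZMod n) := by
      push_cast; ring
    rw [hrg]
    by_cases hc : (Q:ℤ) ∣ c
    · left
      obtain ⟨d, rfl⟩ := hc
      rw [Ideal.span_singleton_eq_bot]
      rw [ZMod.intCast_zmod_eq_zero_iff_dvd]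
      rw [hnz]
      push_cast
      exact ⟨d, by ring⟩
    · right
      have hcop : IsCoprime (Q:ℤ) c := by
        rw [Int.isCoprime_iff_gcd_eq_one]
        have hco : Nat.Coprime Q c.natAbs :=
          (Nat.Prime.coprime_iff_not_dvd hQp).mpr (fun h => hc (Int.natAbs_dvd_natAbs.mp (by simpa using h)))
        simpa [Int.gcd] using hco
      obtain ⟨u, v, huv⟩ := hcop
      refine le_antisymm (Ideal.span_singleton_le_span_singleton.mpr ⟨((c:ℤ) : ZMod n), by push_cast; ring⟩)
        (Ideal.span_singleton_le_span_singleton.mpr ?_)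
      have : ((c * (Q^2*M : ℕ) : ℤ) : ZMod n) ∣ (((Q^2*M : ℕ):ℤ) : ZMod n) := by
        refine (zmod_dvd_iff n _ _).mpr ⟨v, ⟨u, ?_⟩⟩
        rw [hnz]; push_cast
        linear_combination (Q:ℤ)^2 * (M:ℤ) * huv.symm
      push_cast at this ⊢
      exact this
  exact ⟨⟨hIbot, hItop⟩, ⟨hJbot, hJtop⟩, ⟨hKbot, hKtop⟩, hIJne, hJKne, hKIne,
    hinfIJ, hinfJK, hinfKI, hsec⟩

/-- If `n = p₁³p₂⋯p_k` with `k ≥ 2` and the `pᵢ` pairwise distinct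
primes, then the ideals `⟨p₁²p₂⋯p_k⟩`, `⟨p₂⋯p_k⟩` and `⟨p₁²⟩` of `ℤ_n` are three
pairwise adjacent vertices of `SII (ℤ_n)`; in particular `SII (ℤ_n)` contains a
cycle of length 3. -/
theorem stmt1 (k : ℕ) (hk : 2 ≤ k) (p : Fin k → ℕ) (hkpos : 0 < k)
    (hp : ∀ i, (p i).Prime) (hinj : Function.Injective p) (n : ℕ)
    (hn : n = p ⟨0, hkpos⟩ ^ 3 * ∏ i ∈ Finset.univ.filter fun i : Fin k => i ≠ ⟨0, hkpos⟩, p i)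
    (I J K : Ideal (ZMod n))
    (hI : I = Ideal.span {((p ⟨0, hkpos⟩ ^ 2 * ∏ i ∈ Finset.univ.filter fun i : Fin k => i ≠ ⟨0, hkpos⟩, p i : ℕ) : ZMod n)})
    (hJ : J = Ideal.span {((∏ i ∈ Finset.univ.filter fun i : Fin k => i ≠ ⟨0, hkpos⟩, p i : ℕ) : ZMod n)})
    (hK : K = Ideal.span {((p ⟨0, hkpos⟩ ^ 2 : ℕ) : ZMod n)}) :
    ∃ (hvI : I ≠ ⊥ ∧ I ≠ ⊤) (hvJ : J ≠ ⊥ ∧ J ≠ ⊤) (hvK : K ≠ ⊥ ∧ K ≠ ⊤),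
      (SII (ZMod n)).Adj ⟨I, hvI⟩ ⟨J, hvJ⟩ ∧
      (SII (ZMod n)).Adj ⟨J, hvJ⟩ ⟨K, hvK⟩ ∧
      (SII (ZMod n)).Adj ⟨K, hvK⟩ ⟨I, hvI⟩ := by
  have hQp : (p ⟨0, hkpos⟩).Prime := hp _
  set Q : ℕ := p ⟨0, hkpos⟩ with hQdef
  set M : ℕ := ∏ i ∈ Finset.univ.filter fun i : Fin k => i ≠ ⟨0, hkpos⟩, p i with hMdef
  have hi1 : (⟨1, by omega⟩ : Fin k) ∈ Finset.univ.filter fun i : Fin k => i ≠ ⟨0, hkpos⟩ := by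
    simp [Fin.ext_iff]
  have hdvd1 : p ⟨1, by omega⟩ ∣ M := Finset.dvd_prod_of_mem _ hi1
  have hMne : M ≠ 0 := by
    rw [hMdef]
    rw [Finset.prod_ne_zero_iff]
    exact fun i _ => (hp i).pos.ne'
  have hM2 : 2 ≤ M :=
    le_trans (hp ⟨1, by omega⟩).two_le (Nat.le_of_dvd (Nat.pos_of_ne_zero hMne) hdvd1)
  have hQM : ¬ Q ∣ M := by
    have hcop : Nat.Coprime Q M := by
      rw [hMdef]
      apply Nat.Coprime.prod_right
      intro i hi
      refine (Nat.coprime_primes hQp (hp i)).mpr (fun h => ?_)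
      have := hinj h
      rw [Finset.mem_filter] at hi
      exact hi.2 this.symm
    intro h
    have := Nat.Coprime.eq_one_of_dvd hcop h
    have := hQp.two_le
    omega
  obtain ⟨⟨hIbot, hItop⟩, ⟨hJbot, hJtop⟩, ⟨hKbot, hKtop⟩, hIJne, hJKne, hKIne,
    hinfIJ, hinfJK, hinfKI, hsec⟩ :=
    main_work Q M hQp hM2 hQM n hn I J K hI hJ hK
  refine ⟨⟨hIbot, hItop⟩, ⟨hJbot, hJtop⟩, ⟨hKbot, hKtop⟩, ?_, ?_, ?_⟩
  · exact show _ ∧ _ from ⟨fun h => hIJne (congrArg Subtype.val h), by rw [hinfIJ]; exact hsec⟩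
  · exact show _ ∧ _ from ⟨fun h => hJKne (congrArg Subtype.val h), by rw [hinfJK]; exact hsec⟩
  · exact show _ ∧ _ from ⟨fun h => hKIne (congrArg Subtype.val h), by rw [hinfKI]; exact hsec⟩
end

section
/- Let R be a nontrivial commutative ring with identity in which every nonzero ideal contains a minimal ideal, and suppose R is not a coreduced ring. Then sec(R) is a nonzero proper ideal of R, and sec(R) is adjacent in SII(R) to every second ideal I of R with I ≠ sec(R). -/
open Pointwise

/-- A *minimal ideal* of `R`: a nonzero ideal `M` such that the only ideals
contained in `M` are `(0)` and `M`. -/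
def IsMinimalIdeal {R : Type*} [CommRing R] (M : Ideal R) : Prop :=
  M ≠ ⊥ ∧ ∀ J : Ideal R, J ≤ M → J = ⊥ ∨ J = M
/-- `secR R` is the sum of all second ideals of `R` (it is `(0)` if `R` has no
second ideals). -/
noncomputable def secR (R : Type*) [CommRing R] : Ideal R :=
  sSup {I : Ideal R | IsSecondIdeal I}

/-- `R` is *coreduced* if `rR = r²R` for every `r : R`. -/
def IsCoreduced (R : Type*) [CommRing R] : Prop :=
  ∀ r : R, Ideal.span {r} = Ideal.span {r ^ 2}

/-- Let `R` be a nontrivial commutative ring in which every nonzero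
ideal contains a minimal ideal, and suppose `R` is not coreduced. Then `sec R` is a
nonzero proper ideal of `R`, and `sec R` is adjacent in `SII R` to every second
ideal `I` of `R` with `I ≠ sec R`. -/
theorem stmt3 (R : Type*) [CommRing R] [Nontrivial R]
    (hmin : ∀ I : Ideal R, I ≠ ⊥ → ∃ M : Ideal R, IsMinimalIdeal M ∧ M ≤ I)
    (hcr : ¬ IsCoreduced R) :
    ∃ hs : secR R ≠ ⊥ ∧ secR R ≠ ⊤,
      ∀ I : Ideal R, IsSecondIdeal I → I ≠ secR R →
        ∃ hv : I ≠ ⊥ ∧ I ≠ ⊤, (SII R).Adj ⟨secR R, hs⟩ ⟨I, hv⟩ := by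
  -- minimal ideals are second
  have hminsec : ∀ M : Ideal R, IsMinimalIdeal M → IsSecondIdeal M := by
    intro M hM
    refine ⟨hM.1, fun r => ?_⟩
    have hle : r • M ≤ M := by
      rintro x hx
      rw [← SetLike.mem_coe, Submodule.coe_pointwise_smul] at hx
      obtain ⟨y, hy, rfl⟩ := hx
      exact M.smul_mem r hy
    exact hM.2 _ hle
  have hne : secR R ≠ ⊥ := by
    obtain ⟨M, hM, -⟩ := hmin ⊤ (by simp)
    intro h
    exact hM.1 (eq_bot_iff.mpr (h ▸ le_sSup (hminsec M hM)))
  have hnt : secR R ≠ ⊤ := by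
    intro h
    apply hcr
    intro r
    have key : ∀ I : Ideal R, IsSecondIdeal I → r • I = r ^ 2 • I := by
      intro I hI
      rcases hI.2 r with h0 | h1
      · simp [sq, mul_smul, h0]
      · simp [sq, mul_smul, h1]
    have htop : ∀ s : R, Ideal.span {s} = s • (⊤ : Ideal R) := by
      intro s
      ext x
      rw [Ideal.mem_span_singleton, ← SetLike.mem_coe, Submodule.coe_pointwise_smul]
      constructor
      · rintro ⟨a, rfl⟩
        exact ⟨a, trivial, smul_eq_mul _ _⟩
      · rintro ⟨a, -, rfl⟩
        exact ⟨a, (smul_eq_mul _ _).symm⟩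
    have hmap : ∀ s : R, s • (secR R) =
        sSup ((fun I => s • I) '' {I : Ideal R | IsSecondIdeal I}) := by
      intro s
      show Submodule.map (DistribMulAction.toLinearMap R R s) _ = _
      rw [secR, sSup_eq_iSup', Submodule.map_iSup, sSup_image']
      rfl
    have : sSup ((fun I => r • I) '' {I : Ideal R | IsSecondIdeal I}) =
        sSup ((fun I => r ^ 2 • I) '' {I : Ideal R | IsSecondIdeal I}) := by
      congr 1
      ext J
      constructor
      · rintro ⟨I, hI, rfl⟩; exact ⟨I, hI, (key I hI).symm⟩
      · rintro ⟨I, hI, rfl⟩; exact ⟨I, hI, key I hI⟩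
    rw [htop r, htop (r ^ 2), ← h, hmap, hmap, this]
  refine ⟨⟨hne, hnt⟩, fun I hI hIne => ?_⟩
  have hle : I ≤ secR R := le_sSup hI
  have hItop : I ≠ ⊤ := fun h => hnt (top_le_iff.mp (h ▸ hle))
  refine ⟨⟨hI.1, hItop⟩, (⟨?_, ?_⟩ : _ ∧ _)⟩
  · exact fun h => hIne (congrArg Subtype.val h).symm
  · simpa [inf_eq_right.mpr hle] using hI
end

section
/- Let R be a commutative ring with identity in which every nonzero ideal contains a minimal ideal, and let I be a nonzero proper ideal of R. Then I is an isolated vertex of SII(R) if and only if I is both a minimal ideal and a maximal ideal of R. -/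
open Pointwise

lemma elt_smul_le_self {R : Type*} [CommRing R] (r : R) (I : Ideal R) : r • I ≤ I := by
  rintro x ⟨s, hs, rfl⟩
  exact I.smul_mem r hs

lemma minimal_second {R : Type*} [CommRing R] {M : Ideal R} (hM : IsMinimalIdeal M) :
    IsSecondIdeal M :=
  ⟨hM.1, fun r => hM.2 (r • M) (elt_smul_le_self r M)⟩

/-- Let `R` be a commutative ring in which every nonzero ideal
contains a minimal ideal, and let `I` be a nonzero proper ideal of `R`. Then `I` is
an isolated vertex of `SII R` iff `I` is both a minimal and a maximal ideal of `R`. -/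
theorem stmt5 (R : Type*) [CommRing R]
    (hmin : ∀ I : Ideal R, I ≠ ⊥ → ∃ M : Ideal R, IsMinimalIdeal M ∧ M ≤ I)
    (I : Ideal R) (hv : I ≠ ⊥ ∧ I ≠ ⊤) :
    (∀ J : {J : Ideal R // J ≠ ⊥ ∧ J ≠ ⊤}, ¬ (SII R).Adj ⟨I, hv⟩ J) ↔
      (IsMinimalIdeal I ∧ I.IsMaximal) := by
  constructor
  · intro h
    have hIminP : ∀ J : Ideal R, J ≤ I → J = ⊥ ∨ J = I := by
      intro J hJI
      by_contra hJ
      push_neg at hJ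
      obtain ⟨hJ0, hJI'⟩ := hJ
      obtain ⟨M, hM, hMJ⟩ := hmin J hJ0
      have hMI : M ≤ I := hMJ.trans hJI
      have hMne : M ≠ I := by
        rintro rfl
        exact hJI' (le_antisymm hJI hMJ)
      have hMtop : M ≠ ⊤ := fun ht => hv.2 (top_le_iff.mp (ht ▸ hMI))
      refine h ⟨M, hM.1, hMtop⟩ ⟨?_, ?_⟩
      · simp only [ne_eq, Subtype.mk.injEq]
        exact fun he => hMne he.symm
      · rw [inf_eq_right.mpr hMI]
        exact minimal_second hM
    have hImin : IsMinimalIdeal I := ⟨hv.1, hIminP⟩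
    refine ⟨hImin, Ideal.isMaximal_def.mpr ⟨hv.2, ?_⟩⟩
    intro K hK
    by_contra hKtop
    have hK0 : K ≠ ⊥ := fun hb => hv.1 (le_bot_iff.mp (hb ▸ hK.le))
    refine h ⟨K, hK0, hKtop⟩ ⟨?_, ?_⟩
    · simp only [ne_eq, Subtype.mk.injEq]
      exact hK.ne
    · rw [inf_eq_left.mpr hK.le]
      exact minimal_second hImin
  · rintro ⟨hImin, hImax⟩ J ⟨hne, hsec⟩
    have h1 : I ⊓ J.1 = I := by
      rcases hImin.2 (I ⊓ J.1) inf_le_left with h | h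
      · exact absurd h hsec.1
      · exact h
    have hle : I ≤ J.1 := inf_eq_left.mp h1
    have : I = J.1 := hImax.eq_of_le J.2.2 hle
    exact hne (Subtype.ext this)
end

section
/- Let n > 1 be an integer that is not prime. Then SII(ℤ_n) is a complete graph if and only if n = p² or n = p³ for some prime number p. -/
open Pointwise

lemma smul_span_eq {R : Type*} [CommRing R] (r a : R) :
    r • Ideal.span {a} = Ideal.span {r * a} := by
  rw [Ideal.span, Submodule.smul_span, Set.smul_set_singleton, smul_eq_mul]

lemma mem_span_iff {n : ℕ} [NeZero n] {d : ℕ} (hd : d ∣ n) (x : ZMod n) :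
    x ∈ Ideal.span {(d : ZMod n)} ↔ d ∣ x.val := by
  constructor
  · intro hx
    rw [Ideal.mem_span_singleton] at hx
    obtain ⟨c, hc⟩ := hx
    have h1 : (x.val : ZMod n) = ((d * c.val : ℕ) : ZMod n) := by
      push_cast
      rw [ZMod.natCast_rightInverse x, ZMod.natCast_rightInverse c, ← hc]
    rw [ZMod.natCast_eq_natCast_iff] at h1
    have h2 := Nat.modEq_iff_dvd.mp h1
    have h3 : (d:ℤ) ∣ ((d * c.val : ℕ) : ℤ) - (x.val : ℤ) :=
      dvd_trans (Int.natCast_dvd_natCast.mpr hd) h2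
    have h4 : (d:ℤ) ∣ ((d * c.val : ℕ) : ℤ) := by push_cast; exact Dvd.intro _ rfl
    have h5 : (d:ℤ) ∣ (x.val : ℤ) := by
      have := dvd_sub h4 h3; simpa using this
    exact_mod_cast h5
  · rintro ⟨m, hm⟩
    rw [Ideal.mem_span_singleton]
    refine ⟨(m : ZMod n), ?_⟩
    conv_lhs => rw [← ZMod.natCast_rightInverse x, hm]
    push_cast; ring

lemma span_nat_inj {n : ℕ} [NeZero n] {d e : ℕ} (hd : d ∣ n) (he : e ∣ n)
    (h : Ideal.span {(d : ZMod n)} = Ideal.span {(e : ZMod n)}) : d = e := by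
  have hn : 0 < n := Nat.pos_of_ne_zero (NeZero.ne n)
  have h1 : d ∣ e := by
    have : (e : ZMod n) ∈ Ideal.span {(d : ZMod n)} := h ▸ Ideal.subset_span rfl
    rw [mem_span_iff hd, ZMod.val_natCast] at this
    exact (Nat.dvd_mod_iff hd).mp this
  have h2 : e ∣ d := by
    have : (d : ZMod n) ∈ Ideal.span {(e : ZMod n)} := h ▸ Ideal.subset_span rfl
    rw [mem_span_iff he, ZMod.val_natCast] at this
    exact (Nat.dvd_mod_iff he).mp this
  exact Nat.dvd_antisymm h1 h2

lemma span_n_eq_bot (n : ℕ) : Ideal.span {(n : ZMod n)} = ⊥ := by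
  rw [ZMod.natCast_self, Ideal.span_singleton_eq_bot]

lemma classify {n : ℕ} [NeZero n] (I : Ideal (ZMod n)) :
    ∃ d : ℕ, d ∣ n ∧ I = Ideal.span {(d : ZMod n)} := by
  haveI : IsPrincipalIdealRing (ZMod n) :=
    IsPrincipalIdealRing.of_surjective (Int.castRingHom (ZMod n)) ZMod.intCast_surjective
  obtain ⟨x, hx⟩ := (IsPrincipalIdealRing.principal I).principal
  refine ⟨Nat.gcd x.val n, Nat.gcd_dvd_right _ _, ?_⟩
  have hx' : I = Ideal.span {x} := hx
  rw [hx']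
  apply le_antisymm
  · rw [Ideal.span_le, Set.singleton_subset_iff]
    rw [SetLike.mem_coe, mem_span_iff (Nat.gcd_dvd_right x.val n)]
    exact Nat.gcd_dvd_left _ _
  · rw [Ideal.span_le, Set.singleton_subset_iff, SetLike.mem_coe, Ideal.mem_span_singleton]
    have hb := Int.gcd_eq_gcd_ab (x.val : ℤ) (n : ℤ)
    refine ⟨((Int.gcdA (x.val : ℤ) (n : ℤ) : ℤ) : ZMod n), ?_⟩
    have : ((Nat.gcd x.val n : ℤ) : ZMod n) = ((((x.val:ℤ)) * Int.gcdA (x.val:ℤ) (n:ℤ) + (n:ℤ) * Int.gcdB (x.val:ℤ) (n:ℤ) : ℤ) : ZMod n) := by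
      rw [← hb]; norm_cast
    push_cast at this
    rw [ZMod.natCast_rightInverse x] at this
    simp only [ZMod.natCast_self, zero_mul, add_zero] at this
    exact_mod_cast this
-- span{d} properties as vertex
lemma mk_vertex {n : ℕ} [NeZero n] {d : ℕ} (hd : d ∣ n) (hd1 : d ≠ 1) (hdn : d ≠ n) :
    Ideal.span {(d : ZMod n)} ≠ ⊥ ∧ Ideal.span {(d : ZMod n)} ≠ ⊤ := by
  constructor
  · intro h
    exact hdn (span_nat_inj hd dvd_rfl (h.trans (span_n_eq_bot n).symm))
  · intro h
    apply hd1
    apply span_nat_inj hd (one_dvd n)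
    rw [h, Nat.cast_one, Ideal.span_singleton_one]

/-- Let `n > 1` be a non-prime integer. Then `SII (ℤ_n)` is a
complete graph iff `n = p²` or `n = p³` for some prime `p`. -/
theorem stmt7 (n : ℕ) (hn : 1 < n) (hnp : ¬ n.Prime) :
    (∀ u v : {I : Ideal (ZMod n) // I ≠ ⊥ ∧ I ≠ ⊤}, u ≠ v → (SII (ZMod n)).Adj u v) ↔
      ∃ p : ℕ, p.Prime ∧ (n = p ^ 2 ∨ n = p ^ 3) := by
  haveI : NeZero n := ⟨by omega⟩
  constructor
  · intro hcomp
    set p := n.minFac with hpdef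
    have hp : p.Prime := Nat.minFac_prime (by omega)
    have hpn : p ∣ n := Nat.minFac_dvd n
    by_cases hq : ∀ q : ℕ, q.Prime → q ∣ n → q = p
    · -- prime power case
      have hnpk : n = p ^ n.primeFactorsList.length :=
        Nat.eq_prime_pow_of_unique_prime_dvd (by omega) (fun hd hdn => hq _ hd hdn)
      set k := n.primeFactorsList.length with hk
      refine ⟨p, hp, ?_⟩
      have hk2 : 2 ≤ k := by
        rcases Nat.lt_or_ge k 2 with h | h
        · interval_cases k
          · simp at hnpk; omega
          · rw [pow_one] at hnpk; exact absurd (hnpk ▸ hp) hnp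
        · exact h
      by_contra hcon
      push_neg at hcon
      have hk4 : 4 ≤ k := by
        rcases Nat.lt_or_ge k 4 with h | h
        · interval_cases k
          · exact absurd (Or.inl hnpk) (by tauto)
          · exact absurd (Or.inr hnpk) (by tauto)
        · exact h
      -- use I = span p, J = span p²
      have hp1 : 1 < p := hp.one_lt
      have hd1 : (p : ℕ) ∣ n := hpn
      have hd2 : (p^2 : ℕ) ∣ n := by rw [hnpk]; exact pow_dvd_pow p (by omega)
      have hne1 : (p:ℕ) ≠ n := by rw [hnpk]; exact Nat.ne_of_lt (by calc p = p^1 := (pow_one p).symm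
                                                                        _ < p^k := Nat.pow_lt_pow_right hp1 (by omega))
      have hne2 : (p^2:ℕ) ≠ n := by rw [hnpk]; exact Nat.ne_of_lt (Nat.pow_lt_pow_right hp1 (by omega))
      obtain ⟨hb1, ht1⟩ := mk_vertex hd1 (by omega) hne1
      obtain ⟨hb2, ht2⟩ := mk_vertex hd2 (by nlinarith) hne2
      set u : {I : Ideal (ZMod n) // I ≠ ⊥ ∧ I ≠ ⊤} := ⟨_, hb1, ht1⟩
      set v : {I : Ideal (ZMod n) // I ≠ ⊥ ∧ I ≠ ⊤} := ⟨_, hb2, ht2⟩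
      have huv : u ≠ v := by
        intro h
        have := span_nat_inj hd1 hd2 (congrArg Subtype.val h)
        nlinarith
      have hadj := hcomp u v huv
      have hsec : IsSecondIdeal (u.1 ⊓ v.1) := hadj.2
      have hle : v.1 ≤ u.1 := by
        rw [show u.1 = Ideal.span {((p:ℕ) : ZMod n)} from rfl,
            show v.1 = Ideal.span {((p^2:ℕ) : ZMod n)} from rfl,
            Ideal.span_singleton_le_span_singleton]
        exact ⟨(p : ZMod n), by push_cast; ring⟩
      rw [inf_eq_right.mpr hle] at hsec
      rcases hsec.2 (((p^(k-3) : ℕ)) : ZMod n) with h | h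
      · rw [show v.1 = Ideal.span {((p^2:ℕ) : ZMod n)} from rfl, smul_span_eq,
            show ((p^(k-3) : ℕ) : ZMod n) * ((p^2:ℕ) : ZMod n) = ((p^(k-1) : ℕ) : ZMod n) by
              push_cast; rw [← pow_add]; congr 1; omega] at h
        have := span_nat_inj (d := p^(k-1)) (e := n)
          (by rw [hnpk]; exact pow_dvd_pow p (by omega)) dvd_rfl
          (h.trans (span_n_eq_bot n).symm)
        rw [hnpk] at this
        have := Nat.pow_right_injective hp.two_le this
        omega
      · rw [show v.1 = Ideal.span {((p^2:ℕ) : ZMod n)} from rfl, smul_span_eq,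
            show ((p^(k-3) : ℕ) : ZMod n) * ((p^2:ℕ) : ZMod n) = ((p^(k-1) : ℕ) : ZMod n) by
              push_cast; rw [← pow_add]; congr 1; omega] at h
        have := span_nat_inj (d := p^(k-1)) (e := p^2)
          (by rw [hnpk]; exact pow_dvd_pow p (by omega)) hd2 h
        have := Nat.pow_right_injective hp.two_le this
        omega
    · -- two distinct primes
      exfalso
      push_neg at hq
      obtain ⟨q, hqp, hqn, hqne⟩ := hq
      have hp1 : 1 < p := hp.one_lt
      have hq1 : 1 < q := hqp.one_lt
      have hdp : (n / p : ℕ) ∣ n := Nat.div_dvd_of_dvd hpn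
      have hdq : (n / q : ℕ) ∣ n := Nat.div_dvd_of_dvd hqn
      have hnp0 : 0 < n / p := Nat.div_pos (Nat.le_of_dvd (by omega) hpn) (by omega)
      have hnq0 : 0 < n / q := Nat.div_pos (Nat.le_of_dvd (by omega) hqn) (by omega)
      have hpe : p * (n / p) = n := Nat.mul_div_cancel' hpn
      have hqe : q * (n / q) = n := Nat.mul_div_cancel' hqn
      have hne1p : n / p ≠ 1 := by
        intro h; rw [h, mul_one] at hpe; exact hnp (hpe ▸ hp)
      have hne1q : n / q ≠ 1 := by
        intro h; rw [h, mul_one] at hqe; exact hnp (hqe ▸ hqp)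
      have hnenp : n / p ≠ n := by
        intro h; rw [h] at hpe; nlinarith
      have hnenq : n / q ≠ n := by
        intro h; rw [h] at hqe; nlinarith
      obtain ⟨hb1, ht1⟩ := mk_vertex hdp hne1p hnenp
      obtain ⟨hb2, ht2⟩ := mk_vertex hdq hne1q hnenq
      set u : {I : Ideal (ZMod n) // I ≠ ⊥ ∧ I ≠ ⊤} := ⟨_, hb1, ht1⟩
      set v : {I : Ideal (ZMod n) // I ≠ ⊥ ∧ I ≠ ⊤} := ⟨_, hb2, ht2⟩
      have huv : u ≠ v := by
        intro h
        have heq := span_nat_inj hdp hdq (congrArg Subtype.val h)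
        have : p = q := by
          have : p * (n/p) = q * (n/p) := by rw [heq] at hpe ⊢; omega
          exact Nat.eq_of_mul_eq_mul_right hnp0 this
        exact hqne this.symm
      have hsec : IsSecondIdeal (u.1 ⊓ v.1) := (hcomp u v huv).2
      apply hsec.1
      -- show the inf is ⊥
      rw [eq_bot_iff]
      intro x hx
      obtain ⟨hx1, hx2⟩ := hx
      rw [SetLike.mem_coe] at hx1 hx2
      have h1 : (n/p : ℕ) ∣ x.val := (mem_span_iff hdp x).mp hx1
      have h2 : (n/q : ℕ) ∣ x.val := (mem_span_iff hdq x).mp hx2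
      have hn1 : n ∣ p * x.val := by
        obtain ⟨c, hc⟩ := h1; exact ⟨c, by rw [hc, ← mul_assoc, hpe]⟩
      have hn2 : n ∣ q * x.val := by
        obtain ⟨c, hc⟩ := h2; exact ⟨c, by rw [hc, ← mul_assoc, hqe]⟩
      have hcop : Nat.Coprime p q := (Nat.coprime_primes hp hqp).mpr (fun h => hqne h.symm)
      have hdgcd : n ∣ Nat.gcd (p * x.val) (q * x.val) := Nat.dvd_gcd hn1 hn2
      rw [Nat.gcd_mul_right, hcop, one_mul] at hdgcd
      have : x.val = 0 := by
        have := ZMod.val_lt x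
        rcases Nat.eq_zero_or_pos x.val with h | h
        · exact h
        · exact absurd (Nat.le_of_dvd h hdgcd) (by omega)
      rw [Submodule.mem_bot]
      exact (ZMod.val_eq_zero x).mp this
  · rintro ⟨p, hp, hcase⟩ u v huv
    have hp1 : 1 < p := hp.one_lt
    refine ⟨huv, ?_⟩
    obtain ⟨d, hd, hud⟩ := classify u.1
    obtain ⟨e, he, hve⟩ := classify v.1
    rcases hcase with hn2 | hn3
    · -- n = p^2 : no two distinct vertices
      exfalso
      obtain ⟨i, hi2, hdi⟩ := (Nat.dvd_prime_pow hp).mp (hn2 ▸ hd)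
      obtain ⟨j, hj2, hej⟩ := (Nat.dvd_prime_pow hp).mp (hn2 ▸ he)
      have hi : i = 1 := by
        rcases Nat.lt_or_ge i 1 with h | _
        · interval_cases i
          simp [hdi] at hud
          exact (u.2.2 hud).elim
        · rcases Nat.lt_or_ge i 2 with h | h
          · omega
          · have : i = 2 := by omega
            exact absurd (by rw [hud, hdi, this, ← hn2]; exact span_n_eq_bot n) u.2.1
      have hj : j = 1 := by
        rcases Nat.lt_or_ge j 1 with h | _
        · interval_cases j
          simp [hej] at hve
          exact (v.2.2 hve).elim
        · rcases Nat.lt_or_ge j 2 with h | h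
          · omega
          · have : j = 2 := by omega
            exact absurd (by rw [hve, hej, this, ← hn2]; exact span_n_eq_bot n) v.2.1
      apply huv
      apply Subtype.ext
      rw [hud, hve, hdi, hej, hi, hj]
    · -- n = p^3
      obtain ⟨i, hi3, hdi⟩ := (Nat.dvd_prime_pow hp).mp (hn3 ▸ hd)
      obtain ⟨j, hj3, hej⟩ := (Nat.dvd_prime_pow hp).mp (hn3 ▸ he)
      have hi0 : i ≠ 0 := by
        rintro rfl
        simp [hdi] at hud
        exact u.2.2 hud
      have hi3' : i ≠ 3 := by
        rintro rfl
        exact u.2.1 (by rw [hud, hdi, ← hn3]; exact span_n_eq_bot n)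
      have hj0 : j ≠ 0 := by
        rintro rfl
        simp [hej] at hve
        exact v.2.2 hve
      have hj3' : j ≠ 3 := by
        rintro rfl
        exact v.2.1 (by rw [hve, hej, ← hn3]; exact span_n_eq_bot n)
      have hij : i ≠ j := by
        rintro rfl
        exact huv (Subtype.ext (by rw [hud, hve, hdi, hej]))
      have hinf : u.1 ⊓ v.1 = Ideal.span {((p^2 : ℕ) : ZMod n)} := by
        have key : ∀ a b : ℕ, a = 1 → b = 2 →
            Ideal.span {((p^a : ℕ) : ZMod n)} ⊓ Ideal.span {((p^b : ℕ) : ZMod n)}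
              = Ideal.span {((p^2 : ℕ) : ZMod n)} := by
          rintro a b rfl rfl
          rw [inf_eq_right.mpr]
          rw [Ideal.span_singleton_le_span_singleton]
          exact ⟨(p : ZMod n), by push_cast; ring⟩
        rcases show (i = 1 ∧ j = 2) ∨ (i = 2 ∧ j = 1) by omega with ⟨h1, h2⟩ | ⟨h1, h2⟩
        · rw [hud, hve, hdi, hej]; exact key i j h1 h2
        · rw [hud, hve, hdi, hej, inf_comm]; exact key j i h2 h1
      rw [hinf]
      constructor
      · intro h
        have := span_nat_inj (d := p^2) (e := n) (by rw [hn3]; exact pow_dvd_pow p (by omega))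
          dvd_rfl (h.trans (span_n_eq_bot n).symm)
        rw [hn3] at this
        have := Nat.pow_right_injective hp.two_le this
        omega
      · intro r
        have hsm : r • Ideal.span {((p^2 : ℕ) : ZMod n)}
            = Ideal.span {((r.val * p^2 : ℕ) : ZMod n)} := by
          rw [smul_span_eq, show r * ((p^2 : ℕ) : ZMod n) = ((r.val * p^2 : ℕ) : ZMod n) by
            push_cast; rw [ZMod.natCast_rightInverse r]]
        rw [hsm]
        by_cases hdvd : p ∣ r.val
        · left
          have hdn : n ∣ r.val * p^2 := by
            obtain ⟨c, hc⟩ := hdvd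
            exact ⟨c, by rw [hc, hn3]; ring⟩
          rw [(ZMod.natCast_eq_zero_iff _ n).mpr hdn, Ideal.span_singleton_eq_bot.mpr rfl]
        · right
          have key : ∀ a : ℕ, ¬ p ∣ a → Nat.Coprime a n := fun a h => by
            rw [hn3]
            exact (Nat.coprime_comm.mp (hp.coprime_iff_not_dvd.mpr h)).pow_right 3
          have hcop : Nat.Coprime r.val n := key r.val hdvd
          have hu : IsUnit ((r.val : ℕ) : ZMod n) := (ZMod.isUnit_iff_coprime r.val n).mpr hcop
          rw [show ((r.val * p^2 : ℕ) : ZMod n) = ((r.val : ℕ) : ZMod n) * ((p^2 : ℕ) : ZMod n) by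
            push_cast; ring, Ideal.span_singleton_mul_left_unit hu]
end

section
/- Let n > 1 be an integer that is not prime. Then the graph SII(ℤ_n) is disconnected if and only if n = pq for two distinct prime numbers p and q. -/
open Pointwise

section
variable (n : ℕ) [NeZero n]
set_option linter.unusedSectionVars false
set_option linter.unusedVariables false

theorem mem_span_div {d : ℕ} (hd : d ∣ n) (x : ZMod n) :
    x ∈ Ideal.span {(d : ZMod n)} ↔ d ∣ x.val := by
  rw [Ideal.mem_span_singleton]
  constructor
  · rintro ⟨y, rfl⟩
    rw [ZMod.val_mul, ZMod.val_natCast]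
    exact (Nat.dvd_mod_iff hd).mpr (Dvd.dvd.mul_right ((Nat.dvd_mod_iff hd).mpr dvd_rfl) _)
  · rintro ⟨t, ht⟩
    refine ⟨(t : ZMod n), ?_⟩
    have hx : x = ((x.val : ℕ) : ZMod n) := (ZMod.natCast_rightInverse x).symm
    rw [hx, ht]
    push_cast
    ring

theorem val_cast_div {d : ℕ} (hd : d ∣ n) (hdn : d < n) : ((d : ZMod n)).val = d :=
  ZMod.val_cast_of_lt hdn

theorem span_ne_bot {d : ℕ} (hd : d ∣ n) (h0 : 0 < d) (hdn : d < n) :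
    Ideal.span {(d : ZMod n)} ≠ ⊥ := by
  intro h
  have : (d : ZMod n) ∈ Ideal.span {(d : ZMod n)} := Ideal.subset_span rfl
  rw [h, Ideal.mem_bot, ZMod.natCast_eq_zero_iff] at this
  exact absurd (Nat.le_of_dvd h0 this) (by omega)

theorem span_ne_top (hn : 1 < n) {d : ℕ} (hd : d ∣ n) (h1 : 1 < d) :
    Ideal.span {(d : ZMod n)} ≠ ⊤ := by
  intro h
  have : (1 : ZMod n) ∈ Ideal.span {(d : ZMod n)} := h ▸ Submodule.mem_top
  rw [mem_span_div n hd] at this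
  rw [ZMod.val_one_eq_one_mod, Nat.mod_eq_of_lt hn] at this
  have := Nat.le_of_dvd one_pos this
  omega

theorem span_inj {d e : ℕ} (hd : d ∣ n) (he : e ∣ n) (hdn : d < n) (hen : e < n)
    (h : Ideal.span {(d : ZMod n)} = Ideal.span {(e : ZMod n)}) : d = e := by
  have h1 : (d : ZMod n) ∈ Ideal.span {(e : ZMod n)} := by
    rw [← h]; exact Ideal.subset_span rfl
  have h2 : (e : ZMod n) ∈ Ideal.span {(d : ZMod n)} := by
    rw [h]; exact Ideal.subset_span rfl
  rw [mem_span_div n he, val_cast_div n hd hdn] at h1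
  rw [mem_span_div n hd, val_cast_div n he hen] at h2
  exact Nat.dvd_antisymm h2 h1

theorem span_inf {d e : ℕ} (hd : d ∣ n) (he : e ∣ n) :
    Ideal.span {(d : ZMod n)} ⊓ Ideal.span {(e : ZMod n)} =
      Ideal.span {((Nat.lcm d e : ℕ) : ZMod n)} := by
  ext x
  rw [Submodule.mem_inf, mem_span_div n hd, mem_span_div n he,
    mem_span_div n (Nat.lcm_dvd hd he), Nat.lcm_dvd_iff]

theorem span_le_span {d e : ℕ} (hd : d ∣ n) (hde : d ∣ e) :
    Ideal.span {(e : ZMod n)} ≤ Ideal.span {(d : ZMod n)} := by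
  rw [Ideal.span_singleton_le_iff_mem, Ideal.mem_span_singleton]
  exact_mod_cast Nat.cast_dvd_cast (α := ZMod n) hde

theorem smul_span_singleton (r x : ZMod n) :
    r • Ideal.span {x} = Ideal.span {r * x} := by
  rw [Ideal.span, Submodule.smul_span, Set.smul_set_singleton, smul_eq_mul]

theorem ideal_classify (I : Ideal (ZMod n)) :
    ∃ d : ℕ, d ∣ n ∧ I = Ideal.span {(d : ZMod n)} := by
  haveI : IsPrincipalIdealRing (ZMod n) :=
    IsPrincipalIdealRing.of_surjective (Int.castRingHom (ZMod n)) ZMod.intCast_surjective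
  obtain ⟨g, hg⟩ := (IsPrincipalIdealRing.principal I).principal
  refine ⟨Nat.gcd g.val n, Nat.gcd_dvd_right _ _, ?_⟩
  rw [hg, Ideal.submodule_span_eq]
  apply le_antisymm
  · rw [Ideal.span_singleton_le_iff_mem, mem_span_div n (Nat.gcd_dvd_right _ _)]
    exact Nat.gcd_dvd_left _ _
  · rw [Ideal.span_singleton_le_iff_mem, Ideal.mem_span_singleton]
    refine ⟨((Nat.gcdA g.val n : ℤ) : ZMod n), ?_⟩
    have hb := Nat.gcd_eq_gcd_ab g.val n
    have : ((Nat.gcd g.val n : ℤ) : ZMod n) = (((g.val : ℤ) * Nat.gcdA g.val n + (n : ℤ) * Nat.gcdB g.val n : ℤ) : ZMod n) := by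
      rw [← hb]
    push_cast at this
    rw [ZMod.natCast_self, ZMod.natCast_val, ZMod.cast_id] at this
    simpa [mul_comm] using this

theorem second_iff (hn : 1 < n) {d : ℕ} (hd : d ∣ n) :
    IsSecondIdeal (Ideal.span {(d : ZMod n)}) ↔ ∃ p : ℕ, p.Prime ∧ n = d * p := by
  have hn0 : 0 < n := by omega
  have hd0 : 0 < d := Nat.pos_of_dvd_of_pos hd hn0
  obtain ⟨m, hm⟩ := hd
  have hm0 : 0 < m := by
    rcases Nat.eq_zero_or_pos m with h | h
    · subst h; simp at hm; omega
    · exact h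
  constructor
  · rintro ⟨hbot, hsec⟩
    have hdn : d ≠ n := by
      rintro rfl
      exact hbot (by simp [Ideal.span_singleton_eq_bot, ZMod.natCast_self])
    have hm1 : m ≠ 1 := by rintro rfl; simp at hm; exact hdn hm.symm
    refine ⟨m, ?_, hm⟩
    by_contra hmp
    obtain ⟨a, ham, ha2, ham'⟩ := Nat.exists_dvd_of_not_prime2 (by omega) hmp
    have had : a * d ∣ n := by
      obtain ⟨b, hb⟩ := ham
      exact ⟨b, by rw [hm, hb]; ring⟩
    have hadn : a * d < n := by
      have hle := Nat.le_of_dvd hn0 had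
      have hne : a * d ≠ n := by
        intro h'
        rw [hm, mul_comm a d] at h'
        exact absurd (Nat.eq_of_mul_eq_mul_left hd0 h') (by omega)
      omega
    have hdn' : d < n := lt_of_le_of_ne (Nat.le_of_dvd hn0 ⟨m, hm⟩) hdn
    rcases hsec (a : ZMod n) with h | h <;> rw [smul_span_singleton, ← Nat.cast_mul] at h
    · exact span_ne_bot n had (by positivity) hadn h
    · have := span_inj n had ⟨m, hm⟩ hadn hdn' h
      nlinarith
  · rintro ⟨p, hp, hdp⟩
    have hp1 := hp.one_lt
    have hd_dvd : d ∣ n := ⟨p, hdp⟩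
    have hdlt : d < n := by nlinarith
    refine ⟨span_ne_bot n hd_dvd hd0 hdlt, ?_⟩
    intro r
    have hr : ((r.val : ℕ) : ZMod n) = r := ZMod.natCast_rightInverse r
    by_cases hpr : p ∣ r.val
    · left
      rw [smul_span_singleton, Ideal.span_singleton_eq_bot, ← hr, ← Nat.cast_mul,
        ZMod.natCast_eq_zero_iff]
      obtain ⟨c, hc⟩ := hpr
      exact ⟨c, by rw [hc, hdp]; ring⟩
    · right
      rw [smul_span_singleton]
      apply le_antisymm
      · rw [Ideal.span_singleton_le_iff_mem, Ideal.mem_span_singleton]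
        exact ⟨r, mul_comm r _⟩
      · rw [Ideal.span_singleton_le_iff_mem, Ideal.mem_span_singleton]
        have hcop : Nat.gcd r.val p = 1 :=
          Nat.Coprime.gcd_eq_one ((Nat.Prime.coprime_iff_not_dvd hp).mpr hpr).symm
        have h1 : ((r.val : ℤ) * Nat.gcdA r.val p + (p : ℤ) * Nat.gcdB r.val p) = 1 := by
          rw [← Nat.gcd_eq_gcd_ab, hcop]; norm_num
        have key : ((r.val : ℤ)) * d * (Nat.gcdA r.val p) + (Nat.gcdB r.val p) * ((d : ℤ) * p) = (d : ℤ) := by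
          linear_combination (d : ℤ) * h1
        have := congrArg (fun z : ℤ => (z : ZMod n)) key
        push_cast at this
        have hz : ((d : ZMod n)) * (p : ZMod n) = 0 := by
          rw [← Nat.cast_mul, ← hdp, ZMod.natCast_self]
        rw [hr, hz, mul_zero, add_zero] at this
        exact ⟨((Nat.gcdA r.val p : ℤ) : ZMod n), by linear_combination -this⟩


theorem vertex_spec (hn : 1 < n) (v : {I : Ideal (ZMod n) // I ≠ ⊥ ∧ I ≠ ⊤}) :
    ∃ d : ℕ, d ∣ n ∧ 1 < d ∧ d < n ∧ v.1 = Ideal.span {(d : ZMod n)} := by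
  obtain ⟨d, hd, hspan⟩ := ideal_classify n v.1
  have hd0 : 0 < d := Nat.pos_of_dvd_of_pos hd (by omega)
  have hdn : d ≠ n := by
    rintro rfl
    exact v.2.1 (by rw [hspan]; simp [Ideal.span_singleton_eq_bot, ZMod.natCast_self])
  have hd1 : d ≠ 1 := by
    rintro rfl
    exact v.2.2 (by rw [hspan]; simp)
  exact ⟨d, hd, by omega, lt_of_le_of_ne (Nat.le_of_dvd (by omega) hd) hdn, hspan⟩

def mkV (hn : 1 < n) (c : ℕ) (hc : c ∣ n) (h1 : 1 < c) (h2 : c < n) :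
    {I : Ideal (ZMod n) // I ≠ ⊥ ∧ I ≠ ⊤} :=
  ⟨Ideal.span {(c : ZMod n)}, span_ne_bot n hc (by omega) h2, span_ne_top n hn hc h1⟩

theorem adj_mk (hn : 1 < n) {d c q : ℕ} (hd : d ∣ n) (hd1 : 1 < d) (hdn : d < n)
    (hc : c ∣ n) (hc1 : 1 < c) (hcn : c < n)
    (hq : q.Prime) (hcq : n = c * q) (hdc : d ∣ c) (hne : d ≠ c) :
    (SII (ZMod n)).Adj (mkV n hn d hd hd1 hdn) (mkV n hn c hc hc1 hcn) := by
  refine ⟨fun h => hne (span_inj n hd hc hdn hcn (congrArg Subtype.val h)), ?_⟩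
  show IsSecondIdeal (Ideal.span {(d : ZMod n)} ⊓ Ideal.span {(c : ZMod n)})
  rw [inf_eq_right.mpr (span_le_span n hd hdc), second_iff n hn hc]
  exact ⟨q, hq, hcq⟩

theorem reach_any (hn : 1 < n) (v : {I : Ideal (ZMod n) // I ≠ ⊥ ∧ I ≠ ⊤}) :
    ∃ q c : ℕ, q.Prime ∧ n = q * c ∧ ∃ (hc : c ∣ n) (hc1 : 1 < c) (hcn : c < n),
      (SII (ZMod n)).Reachable v (mkV n hn c hc hc1 hcn) := by
  obtain ⟨d, hd, hd1, hdn, hspan⟩ := vertex_spec n hn v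
  obtain ⟨m, hm⟩ := hd
  have hd : d ∣ n := ⟨m, hm⟩
  have hm1 : 1 < m := by
    rcases Nat.lt_or_ge m 2 with h | h
    · interval_cases m <;> simp at hm <;> omega
    · exact h
  have hq := Nat.minFac_prime (show m ≠ 1 by omega)
  obtain ⟨k, hk⟩ := m.minFac_dvd
  set q := m.minFac with hqdef
  have hk0 : 0 < k := by
    rcases Nat.eq_zero_or_pos k with h | h
    · exfalso; rw [h, mul_zero] at hk; omega
    · exact h
  have hqc : n = q * (d * k) := by rw [hm, hk]; ring
  have hcd : d * k ∣ n := ⟨q, by rw [hqc]; ring⟩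
  have hc1 : 1 < d * k := lt_of_lt_of_le hd1 (Nat.le_mul_of_pos_right d hk0)
  have hcn : d * k < n := by
    rw [hqc]
    have := hq.one_lt
    nlinarith
  have hveq : ∀ (h1 : d ∣ n) (h2 : 1 < d) (h3 : d < n), v = mkV n hn d h1 h2 h3 :=
    fun _ _ _ => Subtype.ext hspan
  by_cases hdc : d = d * k
  · refine ⟨q, d * k, hq, hqc, hcd, hc1, hcn, ?_⟩
    have : v = mkV n hn (d * k) hcd hc1 hcn := by
      apply Subtype.ext
      rw [hspan]
      show _ = Ideal.span {((d * k : ℕ) : ZMod n)}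
      rw [← hdc]
    rw [this]
  · refine ⟨q, d * k, hq, hqc, hcd, hc1, hcn, ?_⟩
    rw [hveq hd hd1 hdn]
    exact (adj_mk n hn hd hd1 hdn hcd hc1 hcn hq (by rw [hqc]; ring)
      (Dvd.intro k rfl) hdc).reachable

theorem hub_reach (hn : 1 < n)
    (hex : ∀ p q : ℕ, p.Prime → q.Prime → p ≠ q → n ≠ p * q)
    {q c r c' : ℕ} (hq : q.Prime) (hr : r.Prime) (h1 : n = q * c) (h2 : n = r * c')
    (hc : c ∣ n) (hc1 : 1 < c) (hcn : c < n)
    (hc' : c' ∣ n) (hc1' : 1 < c') (hcn' : c' < n) :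
    (SII (ZMod n)).Reachable (mkV n hn c hc hc1 hcn) (mkV n hn c' hc' hc1' hcn') := by
  by_cases hqr : q = r
  · subst hqr
    have : c = c' := Nat.eq_of_mul_eq_mul_left hq.pos (h1 ▸ h2)
    subst this
    rfl
  · have hrdvd : r ∣ q * c := ⟨c', by rw [← h1, h2]⟩
    have hrc : r ∣ c := by
      rcases (Nat.Prime.dvd_mul hr).mp hrdvd with h | h
      · exact absurd ((Nat.prime_dvd_prime_iff_eq hr hq).mp h).symm hqr
      · exact h
    obtain ⟨k, hkdef⟩ := hrc
    have hn' : n = q * r * k := by rw [h1, hkdef]; ring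
    have hk0 : 0 < k := by
      rcases Nat.eq_zero_or_pos k with h | h
      · exfalso; rw [h, mul_zero] at hn'; omega
      · exact h
    have hk1 : k ≠ 1 := by
      intro h
      rw [h, mul_one] at hn'
      exact hex q r hq hr hqr hn'
    have hqr1 : 1 < q * r := lt_of_lt_of_le hq.one_lt (Nat.le_mul_of_pos_right q hr.pos)
    have hkn : k < n := by rw [hn']; nlinarith
    have hkd : k ∣ n := ⟨q * r, by rw [hn']; ring⟩
    have hkc' : c' = q * k := by
      have : r * c' = r * (q * k) := by rw [← h2, hn']; ring
      exact Nat.eq_of_mul_eq_mul_left hr.pos this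
    have hk1' : 1 < k := by omega
    have hklt_c : k ≠ c := by rw [hkdef]; nlinarith [hr.one_lt]
    have hklt_c' : k ≠ c' := by rw [hkc']; nlinarith [hq.one_lt]
    have a1 := adj_mk n hn hkd hk1' hkn hc hc1 hcn hq (by rw [h1]; ring)
      (by rw [hkdef]; exact Dvd.intro_left r rfl) hklt_c
    have a2 := adj_mk n hn hkd hk1' hkn hc' hc1' hcn' hr (by rw [h2]; ring)
      (by rw [hkc']; exact Dvd.intro_left q rfl) hklt_c'
    exact a1.reachable.symm.trans a2.reachable

theorem conn (hn : 1 < n) (hnp : ¬ n.Prime)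
    (hex : ∀ p q : ℕ, p.Prime → q.Prime → p ≠ q → n ≠ p * q) :
    (SII (ZMod n)).Connected := by
  rw [SimpleGraph.connected_iff]
  constructor
  · intro u v
    obtain ⟨q, c, hq, hqc, hc, hc1, hcn, hru⟩ := reach_any n hn u
    obtain ⟨r, c2, hr, hrc, hc', hc1', hcn', hrv⟩ := reach_any n hn v
    exact hru.trans ((hub_reach n hn hex hq hr hqc hrc hc hc1 hcn hc' hc1' hcn').trans hrv.symm)
  · have hp := Nat.minFac_prime (show n ≠ 1 by omega)
    have hpd := Nat.minFac_dvd n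
    have hplt : n.minFac < n := by
      rcases lt_or_eq_of_le (Nat.le_of_dvd (by omega) hpd) with h | h
      · exact h
      · exact absurd (h ▸ hp) hnp
    exact ⟨mkV n hn n.minFac hpd hp.one_lt hplt⟩


theorem disc (p q : ℕ) (hp : p.Prime) (hq : q.Prime) (hpq : p ≠ q) (hn : n = p * q)
    (hn1 : 1 < n) : ¬ (SII (ZMod n)).Connected := by
  intro hconn
  have hp1 := hp.one_lt
  have hq1 := hq.one_lt
  have hpn : p < n := by rw [hn]; nlinarith
  have hqn : q < n := by rw [hn]; nlinarith
  have hpd : p ∣ n := ⟨q, hn⟩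
  have hqd : q ∣ n := ⟨p, by rw [hn]; ring⟩
  have hdiv : ∀ d : ℕ, d ∣ n → 1 < d → d < n → d = p ∨ d = q := by
    intro d hd h1 h2
    rw [hn] at hd
    obtain ⟨a, b, ha, hb, rfl⟩ := dvd_mul.mp hd
    rcases hp.eq_one_or_self_of_dvd a ha with rfl | rfl <;>
      rcases hq.eq_one_or_self_of_dvd b hb with rfl | rfl
    · simp at h1
    · right; omega
    · left; omega
    · exfalso; rw [hn] at h2; exact lt_irrefl _ h2
  have hE : ∀ a b, ¬ (SII (ZMod n)).Adj a b := by
    rintro a b ⟨hab, hsec⟩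
    obtain ⟨d, hd, hd1, hdn, hda⟩ := vertex_spec n hn1 a
    obtain ⟨e, he, he1, hen, hdb⟩ := vertex_spec n hn1 b
    have hde : d ≠ e := fun h => hab (Subtype.ext (by rw [hda, hdb, h]))
    have hlcm : Nat.lcm d e = n := by
      rcases hdiv d hd hd1 hdn with rfl | rfl <;> rcases hdiv e he he1 hen with rfl | rfl
      · exact absurd rfl hde
      · rw [Nat.Coprime.lcm_eq_mul ((Nat.coprime_primes hp hq).mpr hpq)]; exact hn.symm
      · rw [Nat.lcm_comm, Nat.Coprime.lcm_eq_mul ((Nat.coprime_primes hp hq).mpr hpq)]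
        exact hn.symm
      · exact absurd rfl hde
    apply hsec.1
    rw [hda, hdb, span_inf n hd he, hlcm]
    simp [Ideal.span_singleton_eq_bot, ZMod.natCast_self]
  have hbot : SII (ZMod n) = ⊥ := by
    ext a b
    simp only [SimpleGraph.bot_adj, iff_false]
    exact hE a b
  have hre := hconn.preconnected (mkV n hn1 p hpd hp1 hpn) (mkV n hn1 q hqd hq1 hqn)
  rw [hbot, SimpleGraph.reachable_bot] at hre
  exact hpq (span_inj n hpd hqd hpn hqn (congrArg Subtype.val hre))
end


/-- Let `n > 1` be a non-prime integer. Then `SII (ℤ_n)` is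
disconnected iff `n = pq` for two distinct primes `p` and `q`. -/
theorem stmt8 (n : ℕ) (hn : 1 < n) (hnp : ¬ n.Prime) :
    ¬ (SII (ZMod n)).Connected ↔
      ∃ p q : ℕ, p.Prime ∧ q.Prime ∧ p ≠ q ∧ n = p * q := by
  haveI : NeZero n := ⟨by omega⟩
  constructor
  · intro hdis
    by_contra hex
    push_neg at hex
    exact hdis (conn n hn hnp hex)
  · rintro ⟨p, q, hp, hq, hpq, hnpq⟩
    exact disc n p q hp hq hpq hnpq hn
end

section
/- Let R be a commutative ring with identity. If there exist two non-comparable nonzero proper ideals I₁ and I₂ of R (i.e., I₁ ⊄ I₂ and I₂ ⊄ I₁) that are adjacent in SII(R), then the girth of SII(R) equals 3. -/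
open Pointwise

/-
The meet `I₁ ⊓ I₂` is itself a vertex (nonzero, being second), lies strictly below both
ideals by incomparability, and meets each of them in the second ideal `I₁ ⊓ I₂`; so
`I₁`, `I₂`, `I₁ ⊓ I₂` form a triangle.
-/

namespace SimpleGraph

variable {V : Type*} {G : SimpleGraph V}

theorem girth_eq_three_of_adj {a b c : V} (hab : G.Adj a b) (hbc : G.Adj b c)
    (hca : G.Adj c a) : G.girth = 3 := by
  classical
  obtain ⟨u, w, hw, hlen⟩ := G.is3Clique_iff_exists_cycle_length_three.mp
    ⟨{a, b, c}, is3Clique_triple_iff.mpr ⟨hab, hca.symm, hbc⟩⟩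
  exact le_antisymm (hlen ▸ girth_le_length hw) (three_le_girth fun hG => hG w hw)

end SimpleGraph

namespace SII

variable {R : Type*} [CommRing R]

theorem adj_of_lt {K I : {I : Ideal R // I ≠ ⊥ ∧ I ≠ ⊤}} (hKI : K.1 < I.1)
    (hK : IsSecondIdeal K.1) : (SII R).Adj K I :=
  ⟨fun h => hKI.ne (congrArg Subtype.val h), by rwa [inf_eq_left.mpr hKI.le]⟩

def infVertex {I J : {I : Ideal R // I ≠ ⊥ ∧ I ≠ ⊤}} (h : (SII R).Adj I J) :
    {I : Ideal R // I ≠ ⊥ ∧ I ≠ ⊤} :=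
  ⟨I.1 ⊓ J.1, h.2.1, ne_top_of_le_ne_top I.2.2 inf_le_left⟩

theorem infVertex_adj_left {I J : {I : Ideal R // I ≠ ⊥ ∧ I ≠ ⊤}} (h : (SII R).Adj I J)
    (hIJ : ¬ I.1 ≤ J.1) : (SII R).Adj (infVertex h) I :=
  adj_of_lt (inf_lt_left.mpr hIJ) h.2

theorem infVertex_adj_right {I J : {I : Ideal R // I ≠ ⊥ ∧ I ≠ ⊤}} (h : (SII R).Adj I J)
    (hJI : ¬ J.1 ≤ I.1) : (SII R).Adj (infVertex h) J :=
  adj_of_lt (inf_lt_right.mpr hJI) h.2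

end SII

/-- If two non-comparable nonzero proper ideals of `R` are
adjacent in `SII R`, then the girth of `SII R` equals 3. -/
theorem stmt12 (R : Type*) [CommRing R]
    (h : ∃ I₁ I₂ : {I : Ideal R // I ≠ ⊥ ∧ I ≠ ⊤},
      ¬ I₁.1 ≤ I₂.1 ∧ ¬ I₂.1 ≤ I₁.1 ∧ (SII R).Adj I₁ I₂) :
    (SII R).girth = 3 := by
  obtain ⟨I₁, I₂, h₁₂, h₂₁, hadj⟩ := h
  exact SimpleGraph.girth_eq_three_of_adj hadj (SII.infVertex_adj_right hadj h₂₁).symm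
    (SII.infVertex_adj_left hadj h₁₂)
end

section
/- Let R be a commutative ring with identity. If SII(R) is acyclic or has girth strictly greater than 3, then any two ideals of R that are adjacent in SII(R) are comparable (one contains the other); in particular, for every edge of SII(R) one of the two endpoints is a second ideal of R. -/
open Pointwise

lemma triangle_isCycle {V : Type*} {G : SimpleGraph V} {a b c : V}
    (hab : G.Adj a b) (hbc : G.Adj b c) (hca : G.Adj c a) (hac : a ≠ c) :
    (SimpleGraph.Walk.cons hab (SimpleGraph.Walk.cons hbc
      (SimpleGraph.Walk.cons hca SimpleGraph.Walk.nil))).IsCycle := by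
  simp_all [SimpleGraph.Walk.isCycle_def, SimpleGraph.Walk.isTrail_def, Sym2.eq_iff]
  aesop

/-- If `SII R` is acyclic or has girth strictly greater than 3,
then any two ideals adjacent in `SII R` are comparable; in particular, for every
edge of `SII R` one of the two endpoints is a second ideal of `R`. -/
theorem stmt13 (R : Type*) [CommRing R]
    (h : (SII R).IsAcyclic ∨ 3 < (SII R).girth) :
    ∀ I J : {I : Ideal R // I ≠ ⊥ ∧ I ≠ ⊤}, (SII R).Adj I J →
      (I.1 ≤ J.1 ∨ J.1 ≤ I.1) ∧ (IsSecondIdeal I.1 ∨ IsSecondIdeal J.1) := by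
  intro I J hIJ
  obtain ⟨hne, hsec⟩ := hIJ
  have hcomp : I.1 ≤ J.1 ∨ J.1 ≤ I.1 := by
    by_contra hc
    push_neg at hc
    obtain ⟨h1, h2⟩ := hc
    set K : Ideal R := I.1 ⊓ J.1 with hK
    have hKbot : K ≠ ⊥ := hsec.1
    have hKtop : K ≠ ⊤ := fun ht => I.2.2 (top_le_iff.mp (ht.symm.trans_le inf_le_left))
    set Kv : {I : Ideal R // I ≠ ⊥ ∧ I ≠ ⊤} := ⟨K, hKbot, hKtop⟩ with hKv
    have hKI : Kv ≠ I := fun he => h1 (by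
      have : K = I.1 := congrArg Subtype.val he
      exact inf_eq_left.mp this)
    have hKJ : Kv ≠ J := fun he => h2 (by
      have : K = J.1 := congrArg Subtype.val he
      exact inf_eq_right.mp this)
    have hadjJK : (SII R).Adj J Kv := by
      refine ⟨hKJ.symm, ?_⟩
      have : J.1 ⊓ Kv.1 = K := by
        show J.1 ⊓ (I.1 ⊓ J.1) = I.1 ⊓ J.1
        rw [inf_left_comm, inf_idem]
      rw [this]; exact hsec
    have hadjKI : (SII R).Adj Kv I := by
      refine ⟨hKI, ?_⟩
      have : Kv.1 ⊓ I.1 = K := by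
        show (I.1 ⊓ J.1) ⊓ I.1 = I.1 ⊓ J.1
        rw [inf_comm, ← inf_assoc, inf_idem]
      rw [this]; exact hsec
    have hadjIJ : (SII R).Adj I J := ⟨hne, hsec⟩
    have hcyc := triangle_isCycle hadjIJ hadjJK hadjKI (Ne.symm hKI)
    rcases h with hac | hg
    · exact hac _ hcyc
    · have h4 : ¬ (4:ℕ∞) ≤ (SII R).egirth := by
        rw [SimpleGraph.le_egirth]
        push_neg
        exact ⟨I, _, hcyc, by norm_num⟩
      apply h4
      rcases eq_or_ne (SII R).egirth ⊤ with ht | ht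
      · exact ht ▸ le_top
      · rw [← ENat.coe_toNat ht]
        exact_mod_cast (by simpa [SimpleGraph.girth] using hg : 3 < (SII R).egirth.toNat)
  refine ⟨hcomp, ?_⟩
  rcases hcomp with hle | hle
  · left; rwa [inf_eq_left.mpr hle] at hsec
  · right; rwa [inf_eq_right.mpr hle] at hsec
end

section
/- Let R be a commutative ring with identity. If the girth of SII(R) is a finite natural number n, then R has at least ⌊n/2⌋ distinct second ideals. -/
open Pointwise

lemma walk_getVert_eq_getElem {V : Type*} {G : SimpleGraph V} :
    ∀ {u v : V} (p : G.Walk u v) (i : ℕ) (h : i < p.support.length),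
      p.getVert i = p.support[i]
  | _, _, .nil, 0, _ => rfl
  | _, _, .cons _ _, 0, _ => rfl
  | _, _, .cons ha p, (i+1), h => by
      simpa [SimpleGraph.Walk.getVert_cons_succ] using
        walk_getVert_eq_getElem p i (by simpa using h)

lemma cycle_getVert_inj {V : Type*} {G : SimpleGraph V} {a : V} {p : G.Walk a a}
    (hp : p.IsCycle) {i j : ℕ} (hi : i < p.length) (hj : j < p.length)
    (hij : p.getVert i = p.getVert j) : i = j := by
  have hsl : p.support.length = p.length + 1 := p.length_support
  have htl : p.support.tail.length = p.length := by
    rw [List.length_tail, hsl]; rfl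
  have key : ∀ {k : ℕ}, k ≠ 0 → k ≤ p.length → ∀ (hk : k - 1 < p.support.tail.length),
      p.getVert k = p.support.tail[k - 1] := by
    intro k hk0 hkl hk
    rw [List.getElem_tail]
    have hk1 : k - 1 + 1 = k := by omega
    simp only [hk1]
    exact walk_getVert_eq_getElem p k (by omega)
  -- replace 0 indices by p.length
  set I := if i = 0 then p.length else i with hI
  set J := if j = 0 then p.length else j with hJ
  have hgi : p.getVert I = p.getVert i := by
    rw [hI]; split
    · subst ‹i = 0›; rw [p.getVert_length, p.getVert_zero]
    · rfl
  have hgj : p.getVert J = p.getVert j := by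
    rw [hJ]; split
    · subst ‹j = 0›; rw [p.getVert_length, p.getVert_zero]
    · rfl
  have h3 := hp.three_le_length
  have hI0 : I ≠ 0 := by rw [hI]; split <;> omega
  have hJ0 : J ≠ 0 := by rw [hJ]; split <;> omega
  have hIl : I ≤ p.length := by rw [hI]; split <;> omega
  have hJl : J ≤ p.length := by rw [hJ]; split <;> omega
  have hIk : I - 1 < p.support.tail.length := by omega
  have hJk : J - 1 < p.support.tail.length := by omega
  have : p.support.tail[I - 1] = p.support.tail[J - 1] := by
    rw [← key hI0 hIl hIk, ← key hJ0 hJl hJk, hgi, hgj, hij]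
  have := (hp.support_nodup.getElem_inj_iff).mp this
  rw [hI, hJ] at this
  split at this <;> split at this <;> omega

lemma egirth_le_of_cycle {V : Type*} {G : SimpleGraph V} {a : V} {w : G.Walk a a}
    (hw : w.IsCycle) : G.egirth ≤ w.length := by
  rw [SimpleGraph.egirth]
  exact (iInf_le _ a).trans ((iInf_le _ w).trans (iInf_le _ hw))

lemma triangle_cycle {V : Type*} {G : SimpleGraph V} {A B C : V}
    (hAB : G.Adj A B) (hBC : G.Adj B C) (hCA : G.Adj C A) :
    ∃ w : G.Walk A A, w.IsCycle ∧ w.length = 3 := by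
  have h1 : A ≠ B := hAB.ne
  have h2 : B ≠ C := hBC.ne
  have h3 : C ≠ A := hCA.ne
  refine ⟨.cons hAB (.cons hBC (.cons hCA .nil)), ?_, rfl⟩
  rw [SimpleGraph.Walk.cons_isCycle_iff]
  constructor
  · rw [SimpleGraph.Walk.isPath_def]
    simp_all
    exact fun h => h1 h.symm
  · simp [Sym2.eq_iff]
    tauto

/-- If the girth of `SII R` is a finite natural number `n`, then
`R` has at least `⌊n / 2⌋` distinct second ideals. -/
theorem stmt14 (R : Type*) [CommRing R] (n : ℕ) (h : (SII R).girth = (n : ℕ∞)) :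
    ∃ S : Finset (Ideal R), (∀ I ∈ S, IsSecondIdeal I) ∧ n / 2 ≤ S.card := by
  classical
  have hgn : (SII R).girth = n := by exact_mod_cast h
  rcases Nat.eq_zero_or_pos (n / 2) with h0 | hpos
  · exact ⟨∅, by simp, by simp [h0]⟩
  have hn2 : 2 ≤ n := by omega
  have hnac : ¬ (SII R).IsAcyclic := by
    intro hac
    rw [hac.girth_eq_zero] at hgn; omega
  obtain ⟨a, w, hw, hlen⟩ := (SimpleGraph.exists_girth_eq_length).mpr hnac
  rw [hgn] at hlen
  have hwlen : w.length = n := hlen.symm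
  have hegirth : (SII R).egirth = (n : ℕ∞) := by
    have : (SII R).egirth ≠ ⊤ := SimpleGraph.egirth_eq_top.not.mpr hnac
    rw [← ENat.coe_toNat this]
    exact_mod_cast show (SII R).egirth.toNat = n from hgn
  -- vertices of the cycle
  set v : ℕ → {I : Ideal R // I ≠ ⊥ ∧ I ≠ ⊤} := fun i => w.getVert i with hv
  have hadj : ∀ i, i < n → (SII R).Adj (v i) (v (i + 1)) := fun i hi =>
    w.adj_getVert_succ (by omega)
  have hsec : ∀ i, i < n → IsSecondIdeal ((v i).1 ⊓ (v (i+1)).1) := fun i hi =>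
    (hadj i hi).2
  have hinj : ∀ i j, i < n → j < n → v i = v j → i = j := by
    intro i j hi hj hij
    exact cycle_getVert_inj hw (by omega) (by omega) hij
  -- key: when n ≥ 4, each edge intersection is one of the endpoints
  have hkey : 4 ≤ n → ∀ i, i < n →
      (v i).1 ⊓ (v (i+1)).1 = (v i).1 ∨ (v i).1 ⊓ (v (i+1)).1 = (v (i+1)).1 := by
    intro hn4 i hi
    by_contra hcon
    push_neg at hcon
    obtain ⟨hne1, hne2⟩ := hcon
    set D : Ideal R := (v i).1 ⊓ (v (i+1)).1 with hD
    have hDsec : IsSecondIdeal D := hsec i hi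
    have hDbot : D ≠ ⊥ := hDsec.1
    have hDtop : D ≠ ⊤ := by
      intro htop
      have hle : D ≤ (v i).1 := inf_le_left
      rw [htop] at hle
      exact (v i).2.2 (top_le_iff.mp hle)
    set K : {I : Ideal R // I ≠ ⊥ ∧ I ≠ ⊤} := ⟨D, hDbot, hDtop⟩ with hK
    have h1 : (SII R).Adj (v i) K := by
      refine ⟨?_, ?_⟩
      · intro hEq; exact hne1 ((congrArg Subtype.val hEq).symm)
      · have : (v i).1 ⊓ K.1 = D := inf_eq_right.mpr inf_le_left
        rw [this]; exact hDsec
    have h2 : (SII R).Adj K (v (i+1)) := by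
      refine ⟨?_, ?_⟩
      · intro hEq; exact hne2 (congrArg Subtype.val hEq)
      · have : K.1 ⊓ (v (i+1)).1 = D := inf_eq_left.mpr inf_le_right
        rw [this]; exact hDsec
    have h3 : (SII R).Adj (v (i+1)) (v i) := (hadj i hi).symm
    obtain ⟨t, ht, htl⟩ := triangle_cycle h1 h2 h3
    have := egirth_le_of_cycle ht
    rw [htl, hegirth] at this
    have : n ≤ 3 := by exact_mod_cast this
    omega
  -- the function picking second ideals
  set g : Fin (n / 2) → Ideal R := fun k => (v (2 * k)).1 ⊓ (v (2 * k + 1)).1 with hg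
  have hgsec : ∀ k, IsSecondIdeal (g k) := fun k => hsec _ (by omega)
  have hginj : Function.Injective g := by
    intro k k' hkk'
    by_contra hne
    have hkne : (k : ℕ) ≠ (k' : ℕ) := fun hc => hne (Fin.ext hc)
    have hn4 : 4 ≤ n := by
      have := k.isLt; have := k'.isLt; omega
    have hk1 := hkey hn4 (2 * k) (by omega)
    have hk2 := hkey hn4 (2 * k') (by omega)
    have step : ∀ a b : ℕ, a < n → b < n → a ≠ b → (v a).1 ≠ (v b).1 := by
      intro a b ha hb hab hc
      exact hab (hinj a b ha hb (Subtype.ext hc))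
    have hkk2 : (v (2 * (k : ℕ))).1 ⊓ (v (2 * (k : ℕ) + 1)).1
        = (v (2 * (k' : ℕ))).1 ⊓ (v (2 * (k' : ℕ) + 1)).1 := hkk'
    rcases hk1 with e1 | e1 <;> rcases hk2 with e2 | e2 <;>
      rw [e1, e2] at hkk2 <;>
      [ exact step _ _ (by omega) (by omega) (by omega) hkk2;
        exact step _ _ (by omega) (by omega) (by omega) hkk2;
        exact step _ _ (by omega) (by omega) (by omega) hkk2;
        exact step _ _ (by omega) (by omega) (by omega) hkk2 ]
  refine ⟨Finset.image g Finset.univ, ?_, ?_⟩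
  · intro I hI
    obtain ⟨k, _, rfl⟩ := Finset.mem_image.mp hI
    exact hgsec k
  · rw [Finset.card_image_of_injective _ hginj, Finset.card_univ, Fintype.card_fin]
end

section
/- Let R be a commutative ring with identity which is not a field, in which every nonzero ideal contains a minimal ideal, and let 𝓜 be the set of all minimal ideals of R. Then 𝓜 is a dominating set of SII(R) (every nonzero proper ideal of R not belonging to 𝓜 is adjacent in SII(R) to some element of 𝓜), and 𝓜 is a minimal dominating set (no proper subset of 𝓜 is a dominating set of SII(R)). -/
open Pointwise

/-! A minimal ideal `M` is second because `r • M` is an ideal inside `M`. Hence every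
nonzero proper ideal `I ∉ 𝓜` is adjacent to a minimal ideal `M ≤ I`, as `I ⊓ M = M`.
Conversely, two distinct minimal ideals meet in `(0)`, so no two elements of `𝓜` are
adjacent, and an element of `𝓜` left out of `D ⊆ 𝓜` is dominated by nothing in `D`. -/

namespace IsMinimalIdeal

variable {R : Type*} [CommRing R] {M N : Ideal R}

theorem isSecondIdeal (hM : IsMinimalIdeal M) : IsSecondIdeal M := by
  refine ⟨hM.1, fun r => hM.2 _ ?_⟩
  intro x hx
  rw [← SetLike.mem_coe, Submodule.coe_pointwise_smul] at hx
  obtain ⟨y, hy, rfl⟩ := hx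
  exact M.smul_mem r hy

theorem le_of_inf_ne_bot (hM : IsMinimalIdeal M) (h : M ⊓ N ≠ ⊥) : M ≤ N :=
  ((hM.2 _ inf_le_left).resolve_left h).ge.trans inf_le_right

theorem eq_of_le (hM : IsMinimalIdeal M) (hN : IsMinimalIdeal N) (h : M ≤ N) : M = N :=
  (hN.2 M h).resolve_left hM.1

end IsMinimalIdeal

namespace SII

variable {R : Type*} [CommRing R]

theorem adj_of_isMinimalIdeal_le {v w : {I : Ideal R // I ≠ ⊥ ∧ I ≠ ⊤}} (hvw : v ≠ w)
    (hw : IsMinimalIdeal w.1) (hle : w.1 ≤ v.1) : (SII R).Adj v w := by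
  refine ⟨hvw, ?_⟩
  rw [inf_eq_right.mpr hle]
  exact hw.isSecondIdeal

theorem not_adj_of_isMinimalIdeal {v w : {I : Ideal R // I ≠ ⊥ ∧ I ≠ ⊤}}
    (hv : IsMinimalIdeal v.1) (hw : IsMinimalIdeal w.1) : ¬ (SII R).Adj v w :=
  fun ⟨hvw, hsec⟩ => hvw (Subtype.ext (hv.eq_of_le hw (hv.le_of_inf_ne_bot hsec.1)))

end SII

theorem stmt16_general (R : Type*) [CommRing R]
    (hmin : ∀ I : Ideal R, I ≠ ⊥ → ∃ M : Ideal R, IsMinimalIdeal M ∧ M ≤ I)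
    (𝓜 : Set {I : Ideal R // I ≠ ⊥ ∧ I ≠ ⊤})
    (h𝓜 : 𝓜 = {v : {I : Ideal R // I ≠ ⊥ ∧ I ≠ ⊤} | IsMinimalIdeal v.1}) :
    (∀ v : {I : Ideal R // I ≠ ⊥ ∧ I ≠ ⊤}, v ∉ 𝓜 → ∃ w ∈ 𝓜, (SII R).Adj v w) ∧
    (∀ D : Set {I : Ideal R // I ≠ ⊥ ∧ I ≠ ⊤}, D ⊂ 𝓜 →
      ¬ ∀ v : {I : Ideal R // I ≠ ⊥ ∧ I ≠ ⊤}, v ∉ D → ∃ w ∈ D, (SII R).Adj v w) := by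
  subst h𝓜
  refine ⟨fun v hv => ?_, fun D hD hdom => ?_⟩
  · obtain ⟨M, hM, hMv⟩ := hmin v.1 v.2.1
    let w : {I : Ideal R // I ≠ ⊥ ∧ I ≠ ⊤} := ⟨M, hM.1, ne_top_of_le_ne_top v.2.2 hMv⟩
    have hvw : v ≠ w := fun h => hv (h ▸ hM)
    exact ⟨w, hM, SII.adj_of_isMinimalIdeal_le hvw hM hMv⟩
  · obtain ⟨m, hm, hmD⟩ := Set.exists_of_ssubset hD
    obtain ⟨w, hwD, hadj⟩ := hdom m hmD
    exact SII.not_adj_of_isMinimalIdeal hm (hD.1 hwD) hadj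

/-- Let `R` be a commutative ring which is not a field and in which
every nonzero ideal contains a minimal ideal, and let `𝓜` be the set of vertices of
`SII R` that are minimal ideals. Then `𝓜` is a dominating set of `SII R`, and no
proper subset of `𝓜` is a dominating set. -/
theorem stmt16 (R : Type*) [CommRing R] (hfield : ¬ IsField R)
    (hmin : ∀ I : Ideal R, I ≠ ⊥ → ∃ M : Ideal R, IsMinimalIdeal M ∧ M ≤ I)
    (𝓜 : Set {I : Ideal R // I ≠ ⊥ ∧ I ≠ ⊤})
    (h𝓜 : 𝓜 = {v : {I : Ideal R // I ≠ ⊥ ∧ I ≠ ⊤} | IsMinimalIdeal v.1}) :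
    (∀ v : {I : Ideal R // I ≠ ⊥ ∧ I ≠ ⊤}, v ∉ 𝓜 → ∃ w ∈ 𝓜, (SII R).Adj v w) ∧
    (∀ D : Set {I : Ideal R // I ≠ ⊥ ∧ I ≠ ⊤}, D ⊂ 𝓜 →
      ¬ ∀ v : {I : Ideal R // I ≠ ⊥ ∧ I ≠ ⊤}, v ∉ D → ∃ w ∈ D, (SII R).Adj v w) :=
  stmt16_general R hmin 𝓜 h𝓜
end

section
/- Let R be a comultiplication commutative ring with identity, and let I be a nonzero proper ideal of R such that Ann_R(I) is also a nonzero proper ideal of R. Then I and Ann_R(I) are adjacent in SII(R) if and only if they are adjacent in PIS(R). -/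
open Pointwise

/-- The *prime ideal sum graph* `PIS R`: vertices are the nonzero proper ideals of
`R`, and two distinct vertices `I`, `J` are adjacent iff `I + J` is a prime ideal. -/
def PIS (R : Type*) [CommRing R] : SimpleGraph {I : Ideal R // I ≠ ⊥ ∧ I ≠ ⊤} where
  Adj I J := I ≠ J ∧ (I.1 ⊔ J.1).IsPrime
  symm := ⟨fun I J h => ⟨h.1.symm, by rw [sup_comm]; exact h.2⟩⟩
  loopless := ⟨fun I h => h.1 rfl⟩
/-- `R` is a *comultiplication ring* if every ideal `I` of `R` satisfies
`I = Ann_R (Ann_R I)`. -/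
def IsComultiplicationRing (R : Type*) [CommRing R] : Prop :=
  ∀ I : Ideal R, Submodule.annihilator (Submodule.annihilator I : Ideal R) = I


lemma mem_psmul {R : Type*} [CommRing R] {r x : R} {I : Ideal R} :
    x ∈ r • I ↔ ∃ y ∈ I, r * y = x := by
  constructor
  · intro h
    rw [← SetLike.mem_coe, Submodule.coe_pointwise_smul] at h
    obtain ⟨y, hy, rfl⟩ := h
    exact ⟨y, hy, rfl⟩
  · rintro ⟨y, hy, rfl⟩
    exact Submodule.smul_mem_pointwise_smul y r I hy

lemma ann_sup {R : Type*} [CommRing R] (I J : Ideal R) :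
    Submodule.annihilator (I ⊔ J) = Submodule.annihilator I ⊓ Submodule.annihilator J := by
  ext x
  simp only [Submodule.mem_annihilator, Submodule.mem_inf, smul_eq_mul]
  constructor
  · intro h
    exact ⟨fun n hn => h n (le_sup_left (a := I) (b := J) hn),
      fun n hn => h n (le_sup_right (a := I) (b := J) hn)⟩
  · rintro ⟨h1, h2⟩ n hn
    obtain ⟨a, ha, b, hb, rfl⟩ := Submodule.mem_sup.mp hn
    rw [mul_add, h1 a ha, h2 b hb, add_zero]

/-- If S is second then Ann S is prime. -/
lemma second_ann_prime {R : Type*} [CommRing R] {S : Ideal R} (h : IsSecondIdeal S) :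
    (Submodule.annihilator S : Ideal R).IsPrime := by
  obtain ⟨hS, hsec⟩ := h
  constructor
  · intro htop
    apply hS
    ext x
    simp only [Submodule.mem_bot]
    constructor
    · intro hx
      have : (1 : R) ∈ (Submodule.annihilator S : Ideal R) := htop ▸ Submodule.mem_top
      simpa using Submodule.mem_annihilator.mp this x hx
    · rintro rfl; exact S.zero_mem
  · intro r s hrs
    rcases hsec r with h0 | hS'
    · left
      rw [Submodule.mem_annihilator]
      intro n hn
      have : r * n ∈ r • S := mem_psmul.mpr ⟨n, hn, rfl⟩
      rw [h0] at this
      simpa using this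
    · right
      rw [Submodule.mem_annihilator]
      intro n hn
      rw [← hS'] at hn
      obtain ⟨u, hu, rfl⟩ := mem_psmul.mp hn
      have := Submodule.mem_annihilator.mp hrs u hu
      simp only [smul_eq_mul] at this ⊢
      calc s * (r * u) = r * s * u := by ring
        _ = 0 := this

/-- In a comultiplication ring, if Ann S is prime then S is second. -/
lemma ann_prime_second {R : Type*} [CommRing R]
    (hco : ∀ I : Ideal R, Submodule.annihilator (Submodule.annihilator I : Ideal R) = I)
    {S : Ideal R} (h : (Submodule.annihilator S : Ideal R).IsPrime) :
    IsSecondIdeal S := by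
  constructor
  · rintro rfl
    exact h.ne_top Submodule.annihilator_bot
  · intro r
    by_cases hr : r ∈ (Submodule.annihilator S : Ideal R)
    · left
      ext x
      simp only [Submodule.mem_bot, mem_psmul]
      constructor
      · rintro ⟨y, hy, rfl⟩
        simpa using Submodule.mem_annihilator.mp hr y hy
      · rintro rfl; exact ⟨0, S.zero_mem, mul_zero r⟩
    · right
      have key : Submodule.annihilator (r • S) = Submodule.annihilator S := by
        ext x
        simp only [Submodule.mem_annihilator, smul_eq_mul]
        constructor
        · intro hx n hn
          have hxr : x * r ∈ (Submodule.annihilator S : Ideal R) := by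
            rw [Submodule.mem_annihilator]
            intro m hm
            simp only [smul_eq_mul]
            calc x * r * m = x * (r * m) := by ring
              _ = 0 := hx (r * m) (mem_psmul.mpr ⟨m, hm, rfl⟩)
          rcases h.mem_or_mem hxr with hx' | hr'
          · exact Submodule.mem_annihilator.mp hx' n hn
          · exact absurd hr' hr
        · intro hx n hn
          obtain ⟨u, hu, rfl⟩ := mem_psmul.mp hn
          calc x * (r * u) = r * (x * u) := by ring
            _ = r * 0 := by rw [hx u hu]
            _ = 0 := mul_zero r
      have := hco (r • S)
      rw [key, hco S] at this
      exact this.symm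

theorem stmt18' (R : Type*) [CommRing R]
    (hco : ∀ I : Ideal R, Submodule.annihilator (Submodule.annihilator I : Ideal R) = I)
    (I : Ideal R) :
    IsSecondIdeal (I ⊓ Submodule.annihilator I) ↔ (I ⊔ (Submodule.annihilator I : Ideal R)).IsPrime := by
  set A : Ideal R := Submodule.annihilator I with hAdef
  have h1 : Submodule.annihilator (I ⊔ A) = I ⊓ A := by
    rw [ann_sup, hco I, ← hAdef, inf_comm]
  have h2 : Submodule.annihilator (I ⊓ A) = I ⊔ A := by
    rw [← h1, hco]
  constructor
  · intro h
    have := second_ann_prime h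
    rwa [h2] at this
  · intro h
    exact ann_prime_second hco (h2 ▸ h)

/-- Let `R` be a comultiplication ring and `I` a nonzero proper
ideal of `R` whose annihilator is also a nonzero proper ideal. Then `I` and
`Ann_R I` are adjacent in `SII R` iff they are adjacent in `PIS R`. -/
theorem stmt18 (R : Type*) [CommRing R] (hco : IsComultiplicationRing R)
    (I : Ideal R) (hI : I ≠ ⊥ ∧ I ≠ ⊤)
    (hA : (Submodule.annihilator I : Ideal R) ≠ ⊥ ∧ (Submodule.annihilator I : Ideal R) ≠ ⊤) :
    (SII R).Adj ⟨I, hI⟩ ⟨Submodule.annihilator I, hA⟩ ↔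
      (PIS R).Adj ⟨I, hI⟩ ⟨Submodule.annihilator I, hA⟩ := by
  have key := stmt18' R hco I
  constructor
  · rintro ⟨hne, h⟩
    exact ⟨hne, key.mp h⟩
  · rintro ⟨hne, h⟩
    exact ⟨hne, key.mpr h⟩
end
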